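/- arXiv:2102.10724 — 2 statements merged into one kernel-verified Lean document; each statement's English description precedes it below -/
import Mathlib

section
/- For every integer m ≥ 1 and every real x > 0, the polygamma function satisfies (m-1)!/x^m + m!/(2 x^{m+1}) ≤ (-1)^{m+1} ψ^{(m)}(x) ≤ (m-1)!/x^m + m!/x^{m+1}. -/
/-- The digamma function `ψ = Γ'/Γ`. -/
noncomputable def digamma : ℝ → ℝ := fun x => deriv (fun t => Real.log (Real.Gamma t)) x

/-- The polygamma function of order `m`, the `m`-th derivative of the digamma function. -/
noncomputable def polygamma (m : ℕ) : ℝ → ℝ := iteratedDeriv m digamma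

open Real Set Filter Topology Finset

/-!
For `x > 0` the digamma function is monotone (`log Γ` is convex) and satisfies
`ψ(x + 1) = ψ(x) + 1/x`; these two facts alone force `ψ(x) = ψ(1) + ∑ₙ (1/(n+1) - 1/(x+n))`.
Differentiating termwise gives `(-1)^(m+1) ψ^(m)(x) = m! ζ(m+1, x)`, where
`ζ(k, x) = ∑ₙ (x+n)^(-k)` is the Hurwitz zeta function. As `t ↦ t^(-(m+1))` is decreasing and
convex, its integral `((x+n)^(-m) - (x+n+1)^(-m))/m` over `[x+n, x+n+1]` lies between its value
at the right endpoint and the average of its values at the two endpoints; summing over `n`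
telescopes to the two bounds.
-/

noncomputable def realHurwitzZeta (k : ℕ) (x : ℝ) : ℝ := ∑' n : ℕ, ((x + n) ^ k)⁻¹

lemma summable_inv_add_pow {k : ℕ} (hk : 2 ≤ k) (x : ℝ) :
    Summable fun n : ℕ => ((x + n) ^ k)⁻¹ :=
  .of_norm <| ((summable_one_div_nat_add_rpow x k).mpr (by exact_mod_cast hk)).congr fun n => by
    rw [norm_inv, norm_pow, Real.norm_eq_abs, one_div, rpow_natCast, add_comm]

lemma hasDerivAt_inv_pow (k : ℕ) {y : ℝ} (hy : y ≠ 0) :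
    HasDerivAt (fun t : ℝ => (t ^ k)⁻¹) (-k * (y ^ (k + 1))⁻¹) y := by
  refine ((hasDerivAt_pow k y).inv (pow_ne_zero k hy)).congr_deriv ?_
  rcases k with _ | k
  · simp
  rw [Nat.add_sub_cancel]
  field_simp
  ring

lemma summable_and_hasDerivAt_tsum {k : ℕ} (hk : 1 ≤ k) (c : ℕ → ℝ) (a : ℝ) {y₀ x : ℝ}
    (hy₀ : 0 < y₀) (hx : 0 < x) (hsum : Summable fun n : ℕ => c n + a * ((y₀ + n) ^ k)⁻¹) :
    (Summable fun n : ℕ => c n + a * ((x + n) ^ k)⁻¹) ∧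
      HasDerivAt (fun y : ℝ => ∑' n : ℕ, (c n + a * ((y + n) ^ k)⁻¹))
        (-(a * k) * realHurwitzZeta (k + 1) x) x := by
  set ε := min y₀ x / 2 with hε_def
  have hε : 0 < ε := by positivity
  have hy₀ε : y₀ ∈ Ioi ε := mem_Ioi.mpr (by linarith [min_le_left y₀ x, lt_min hy₀ hx])
  have hxε : x ∈ Ioi ε := mem_Ioi.mpr (by linarith [min_le_right y₀ x, lt_min hy₀ hx])
  set g : ℕ → ℝ → ℝ := fun n y => c n + a * ((y + n) ^ k)⁻¹
  set g' : ℕ → ℝ → ℝ := fun n y => -(a * k) * ((y + n) ^ (k + 1))⁻¹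
  have hderiv : ∀ (n : ℕ), ∀ y ∈ Ioi ε, HasDerivAt (g n) (g' n y) y := fun n y hy => by
    have hyn : y + n ≠ 0 := by linarith [mem_Ioi.mp hy, n.cast_nonneg (α := ℝ)]
    exact ((((hasDerivAt_inv_pow k hyn).comp_add_const y n).const_mul a).const_add
      (c n)).congr_deriv (by ring)
  have hbound : ∀ (n : ℕ), ∀ y ∈ Ioi ε, ‖g' n y‖ ≤ |a * k| * ((ε + n) ^ (k + 1))⁻¹ := by
    intro n y hy
    have hyn : ε + n ≤ y + n := by linarith [mem_Ioi.mp hy]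
    rw [norm_mul, norm_neg, norm_inv, norm_pow, Real.norm_eq_abs, Real.norm_eq_abs,
      abs_of_pos (by linarith : 0 < y + n)]
    gcongr
  have hu := (summable_inv_add_pow (by omega : 2 ≤ k + 1) ε).mul_left |a * k|
  refine ⟨summable_of_summable_hasDerivAt_of_isPreconnected (g := g) hu isOpen_Ioi
    isPreconnected_Ioi hderiv hbound hy₀ε hsum hxε, ?_⟩
  have h := hasDerivAt_tsum_of_isPreconnected (g := g) (g' := g') hu isOpen_Ioi
    isPreconnected_Ioi hderiv hbound hy₀ε hsum hxε
  rw [realHurwitzZeta, ← tsum_mul_left]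
  exact h

lemma hasDerivAt_realHurwitzZeta {k : ℕ} (hk : 2 ≤ k) {x : ℝ} (hx : 0 < x) :
    HasDerivAt (realHurwitzZeta k) (-k * realHurwitzZeta (k + 1) x) x := by
  have h := (summable_and_hasDerivAt_tsum (k := k) (by omega) 0 1 hx hx
    (by simpa using summable_inv_add_pow hk x)).2
  simp only [Pi.zero_apply, zero_add, one_mul] at h
  exact h

section MonotoneRecurrence

variable {f : ℝ → ℝ}

lemma add_natCast_eq_add_sum (hrec : ∀ x, 0 < x → f (x + 1) = f x + x⁻¹) {x : ℝ} (hx : 0 < x)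
    (N : ℕ) : f (x + N) = f x + ∑ n ∈ range N, (x + n)⁻¹ := by
  induction N with
  | zero => simp
  | succ N ih =>
    rw [Nat.cast_succ, ← add_assoc, hrec _ (by positivity), ih, sum_range_succ, add_assoc]

lemma tendsto_sum_of_monotoneOn_of_add_one (hmono : MonotoneOn f (Ioi 0))
    (hrec : ∀ x, 0 < x → f (x + 1) = f x + x⁻¹) {x : ℝ} (hx : 0 < x) :
    Tendsto (fun N : ℕ => ∑ n ∈ range N, (((n : ℝ) + 1)⁻¹ - (x + n)⁻¹)) atTop
      (𝓝 (f x - f 1)) := by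
  set K := ⌈x⌉₊
  -- Both `x + N` and `1 + N` lie in `[N, N + K]`, over which `f` increases by at most `K / N`.
  have hgap : ∀ N : ℕ, 1 ≤ N → ‖f (x + N) - f (1 + N)‖ ≤ K / N := fun N hN => by
    have hN : (0 : ℝ) < N := by exact_mod_cast hN
    have hK : (1 : ℝ) ≤ K := by exact_mod_cast Nat.one_le_ceil_iff.mpr hx
    have hxK : x ≤ K := Nat.le_ceil x
    have hwidth : f (N + K) ≤ f N + K / N := by
      rw [add_natCast_eq_add_sum hrec hN]
      have : ∑ n ∈ range K, ((N : ℝ) + n)⁻¹ ≤ ∑ _n ∈ range K, (N : ℝ)⁻¹ :=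
        sum_le_sum fun n _ => inv_anti₀ hN (by linarith [n.cast_nonneg (α := ℝ)])
      rw [sum_const, card_range, nsmul_eq_mul] at this
      linarith [div_eq_mul_inv (K : ℝ) N]
    have hmem : ∀ y : ℝ, N ≤ y → y ≤ N + K → f N ≤ f y ∧ f y ≤ f (N + K) := fun y h₁ h₂ =>
      ⟨hmono hN (hN.trans_le h₁) h₁,
        hmono (hN.trans_le h₁) (by positivity : (0 : ℝ) < N + K) h₂⟩
    obtain ⟨h₁, h₂⟩ := hmem (x + N) (by linarith) (by linarith)
    obtain ⟨h₃, h₄⟩ := hmem (1 + N) (by linarith) (by linarith)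
    rw [Real.norm_eq_abs, abs_le]
    constructor <;> linarith
  have hlim : Tendsto (fun N : ℕ => f (x + N) - f (1 + N)) atTop (𝓝 0) :=
    squeeze_zero_norm' (eventually_atTop.mpr ⟨1, hgap⟩)
      (tendsto_const_div_atTop_nhds_zero_nat (K : ℝ))
  have hpartial : ∀ N : ℕ, ∑ n ∈ range N, (((n : ℝ) + 1)⁻¹ - (x + n)⁻¹)
      = f x - f 1 - (f (x + N) - f (1 + N)) := fun N => by
    rw [sum_sub_distrib, add_natCast_eq_add_sum hrec hx, add_natCast_eq_add_sum hrec one_pos]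
    simp only [add_comm (1 : ℝ)]
    ring
  simpa only [hpartial, sub_zero] using tendsto_const_nhds.sub hlim

end MonotoneRecurrence

lemma differentiableAt_log_Gamma {x : ℝ} (hx : 0 < x) :
    DifferentiableAt ℝ (fun t => log (Gamma t)) x :=
  (differentiableAt_Gamma fun m => by linarith [m.cast_nonneg (α := ℝ)]).log
    (Gamma_pos_of_pos hx).ne'

lemma digamma_add_one {x : ℝ} (hx : 0 < x) : digamma (x + 1) = digamma x + x⁻¹ := by
  unfold digamma
  rw [← deriv_comp_add_const, ← Real.deriv_log,
    ← deriv_add (differentiableAt_log_Gamma hx) (differentiableAt_log hx.ne')]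
  apply Filter.EventuallyEq.deriv_eq
  filter_upwards [eventually_gt_nhds hx] with t ht
  simp only [Gamma_add_one ht.ne', log_mul ht.ne' (Gamma_pos_of_pos ht).ne', add_comm,
    Pi.add_apply]

lemma monotoneOn_digamma : MonotoneOn digamma (Ioi 0) :=
  convexOn_log_Gamma.monotoneOn_deriv fun _ hx => differentiableAt_log_Gamma hx

lemma summable_and_hasDerivAt_digamma_series {x : ℝ} (hx : 0 < x) :
    (Summable fun n : ℕ => ((n : ℝ) + 1)⁻¹ - (x + n)⁻¹) ∧
      HasDerivAt (fun y : ℝ => ∑' n : ℕ, (((n : ℝ) + 1)⁻¹ - (y + n)⁻¹))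
        (realHurwitzZeta 2 x) x := by
  -- every term of the series vanishes at `y = 1`
  have h := summable_and_hasDerivAt_tsum le_rfl (fun n : ℕ => ((n : ℝ) + 1)⁻¹) (-1) one_pos hx
    (by simp [add_comm])
  simpa [sub_eq_add_neg] using h

lemma digamma_eq_add_tsum {x : ℝ} (hx : 0 < x) :
    digamma x = digamma 1 + ∑' n : ℕ, (((n : ℝ) + 1)⁻¹ - (x + n)⁻¹) := by
  have h := tendsto_nhds_unique
    (tendsto_sum_of_monotoneOn_of_add_one monotoneOn_digamma (fun _ => digamma_add_one) hx)
    (summable_and_hasDerivAt_digamma_series hx).1.hasSum.tendsto_sum_nat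
  linarith

lemma hasDerivAt_digamma {x : ℝ} (hx : 0 < x) : HasDerivAt digamma (realHurwitzZeta 2 x) x :=
  ((summable_and_hasDerivAt_digamma_series hx).2.const_add (digamma 1)).congr_of_eventuallyEq <|
    eventuallyEq_of_mem (Ioi_mem_nhds hx) fun _ hy => digamma_eq_add_tsum hy

lemma eqOn_polygamma_succ (m : ℕ) :
    EqOn (polygamma (m + 1))
      (fun x => (-1) ^ m * (m + 1).factorial * realHurwitzZeta (m + 2) x) (Ioi 0) := by
  induction m with
  | zero =>
    intro x hx
    simp [polygamma, (hasDerivAt_digamma hx).deriv]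
  | succ m ih =>
    intro x hx
    have hζ := ((hasDerivAt_realHurwitzZeta (by omega : 2 ≤ m + 2) hx).const_mul
      ((-1) ^ m * ((m + 1).factorial : ℝ)))
    rw [polygamma, iteratedDeriv_succ, ← polygamma,
      (eventuallyEq_of_mem (Ioi_mem_nhds hx) ih).deriv_eq, hζ.deriv,
      Nat.factorial_succ (m + 1)]
    push_cast
    ring

lemma ConvexOn.intervalIntegral_le_trapezoid {f : ℝ → ℝ} {a b : ℝ} (hab : a ≤ b)
    (hf : ConvexOn ℝ (Icc a b) f) (hint : IntervalIntegrable f MeasureTheory.volume a b) :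
    ∫ t in a..b, f t ≤ (b - a) * ((f a + f b) / 2) := by
  rcases hab.eq_or_lt with rfl | hlt
  · simp
  have hba : 0 < b - a := sub_pos.mpr hlt
  have hsecant : ∀ t ∈ Icc a b, f t ≤ f a + (t - a) * ((f b - f a) / (b - a)) := by
    intro t ⟨hat, htb⟩
    have h := hf.2 (left_mem_Icc.mpr hab) (right_mem_Icc.mpr hab)
      (div_nonneg (sub_nonneg.mpr htb) hba.le) (div_nonneg (sub_nonneg.mpr hat) hba.le)
      (by field_simp; ring)
    have hpt : ((b - t) / (b - a)) • a + ((t - a) / (b - a)) • b = t := by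
      simp only [smul_eq_mul]
      field_simp
      ring
    rw [hpt, smul_eq_mul, smul_eq_mul] at h
    calc f t ≤ _ := h
      _ = _ := by field_simp; ring
  calc ∫ t in a..b, f t
      ≤ ∫ t in a..b, (f a + (t - a) * ((f b - f a) / (b - a))) :=
        intervalIntegral.integral_mono_on hab hint
          (by apply Continuous.intervalIntegrable; fun_prop) hsecant
    _ = (b - a) * ((f a + f b) / 2) := by
        rw [intervalIntegral.integral_add (by simp)
            (by apply Continuous.intervalIntegrable; fun_prop),
          intervalIntegral.integral_mul_const,
          intervalIntegral.integral_comp_sub_right (fun t => t), integral_id,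
          intervalIntegral.integral_const]
        field_simp
        ring

lemma convexOn_inv_pow (k : ℕ) : ConvexOn ℝ (Ioi 0) fun t : ℝ => (t ^ k)⁻¹ :=
  (convexOn_zpow (-k : ℤ)).congr fun t _ => by simp [zpow_neg]

lemma intervalIntegrable_inv_pow (k : ℕ) {a b : ℝ} (ha : 0 < a) (hab : a ≤ b) :
    IntervalIntegrable (fun t : ℝ => (t ^ k)⁻¹) MeasureTheory.volume a b := by
  refine ContinuousOn.intervalIntegrable ((continuousOn_pow k).inv₀ fun t ht => ?_)
  rw [uIcc_of_le hab] at ht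
  exact pow_ne_zero k (by linarith [ht.1])

lemma integral_inv_pow_succ {p : ℕ} (hp : p ≠ 0) {a b : ℝ} (ha : 0 < a) (hab : a ≤ b) :
    ∫ t in a..b, (t ^ (p + 1))⁻¹ = ((a ^ p)⁻¹ - (b ^ p)⁻¹) / p := by
  have hderiv :
      ∀ t ∈ uIcc a b, HasDerivAt (fun t : ℝ => -(t ^ p)⁻¹ / p) (t ^ (p + 1))⁻¹ t := by
    intro t ht
    rw [uIcc_of_le hab] at ht
    refine ((hasDerivAt_inv_pow p (by linarith [ht.1])).neg.div_const _).congr_deriv ?_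
    field_simp
  rw [intervalIntegral.integral_eq_sub_of_hasDerivAt hderiv
    (intervalIntegrable_inv_pow (p + 1) ha hab)]
  ring

lemma inv_add_one_pow_succ_le_sub_div {p : ℕ} (hp : p ≠ 0) {b : ℝ} (hb : 0 < b) :
    ((b + 1) ^ (p + 1))⁻¹ ≤ ((b ^ p)⁻¹ - ((b + 1) ^ p)⁻¹) / p := by
  rw [← integral_inv_pow_succ hp hb (by linarith)]
  calc ((b + 1) ^ (p + 1))⁻¹ = ∫ _ in b..b + 1, ((b + 1) ^ (p + 1))⁻¹ := by simp
    _ ≤ ∫ t in b..b + 1, (t ^ (p + 1))⁻¹ :=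
      intervalIntegral.integral_mono_on (by linarith) (by simp)
        (intervalIntegrable_inv_pow _ hb (by linarith)) fun t ht => by
          have : 0 < t := hb.trans_le ht.1
          gcongr
          exact ht.2

lemma sub_div_le_average_inv_pow_succ {p : ℕ} (hp : p ≠ 0) {b : ℝ} (hb : 0 < b) :
    ((b ^ p)⁻¹ - ((b + 1) ^ p)⁻¹) / p ≤ ((b ^ (p + 1))⁻¹ + ((b + 1) ^ (p + 1))⁻¹) / 2 := by
  rw [← integral_inv_pow_succ hp hb (by linarith)]
  have hconv := (convexOn_inv_pow (p + 1)).subset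
    ((Icc_subset_Ioi_iff (by linarith)).mpr hb) (convex_Icc b (b + 1))
  simpa using hconv.intervalIntegral_le_trapezoid (by linarith)
    (intervalIntegrable_inv_pow _ hb (by linarith))

lemma hasSum_sub_inv_pow_div {p : ℕ} (hp : p ≠ 0) {x : ℝ} (hx : 0 < x) :
    HasSum (fun n : ℕ => (((x + n) ^ p)⁻¹ - ((x + n + 1) ^ p)⁻¹) / p) ((x ^ p)⁻¹ / p) := by
  set g : ℕ → ℝ := fun n => ((x + n) ^ p)⁻¹ / p
  have hg : Tendsto g atTop (𝓝 0) := by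
    have hx_add := tendsto_atTop_add_const_left atTop x tendsto_natCast_atTop_atTop
    simpa using ((tendsto_pow_atTop hp).comp hx_add).inv_tendsto_atTop.div_const (p : ℝ)
  have hterm : ∀ n : ℕ, (((x + n) ^ p)⁻¹ - ((x + n + 1) ^ p)⁻¹) / p = g n - g (n + 1) := by
    intro n
    simp only [g, Nat.cast_succ, add_assoc]
    ring
  rw [hasSum_iff_tendsto_nat_of_nonneg fun n => (inv_nonneg.mpr (by positivity)).trans
    (inv_add_one_pow_succ_le_sub_div hp (by positivity))]
  simp_rw [hterm, sum_range_sub']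
  simpa [g] using tendsto_const_nhds.sub hg

lemma hasSum_inv_add_succ_pow {k : ℕ} (hk : 2 ≤ k) (x : ℝ) :
    HasSum (fun n : ℕ => ((x + n + 1) ^ k)⁻¹) (realHurwitzZeta k x - (x ^ k)⁻¹) := by
  have h := (hasSum_nat_add_iff' 1).mpr (summable_inv_add_pow hk x).hasSum
  simpa [add_assoc, realHurwitzZeta] using h

lemma realHurwitzZeta_succ_le {p : ℕ} (hp : p ≠ 0) {x : ℝ} (hx : 0 < x) :
    realHurwitzZeta (p + 1) x ≤ (x ^ p)⁻¹ / p + (x ^ (p + 1))⁻¹ := by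
  have h := hasSum_le
    (fun n : ℕ => inv_add_one_pow_succ_le_sub_div hp (by positivity : 0 < x + n))
    (hasSum_inv_add_succ_pow (by omega : 2 ≤ p + 1) x) (hasSum_sub_inv_pow_div hp hx)
  linarith

lemma le_realHurwitzZeta_succ {p : ℕ} (hp : p ≠ 0) {x : ℝ} (hx : 0 < x) :
    (x ^ p)⁻¹ / p + (x ^ (p + 1))⁻¹ / 2 ≤ realHurwitzZeta (p + 1) x := by
  have hζ : HasSum (fun n : ℕ => ((x + n) ^ (p + 1))⁻¹) (realHurwitzZeta (p + 1) x) :=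
    (summable_inv_add_pow (by omega) x).hasSum
  have h := hasSum_le
    (fun n : ℕ => sub_div_le_average_inv_pow_succ hp (by positivity : 0 < x + n))
    (hasSum_sub_inv_pow_div hp hx)
    ((hζ.add (hasSum_inv_add_succ_pow (by omega : 2 ≤ p + 1) x)).div_const 2)
  linarith

lemma neg_one_pow_mul_polygamma_succ (p : ℕ) {x : ℝ} (hx : 0 < x) :
    (-1 : ℝ) ^ (p + 1 + 1) * polygamma (p + 1) x =
      (p + 1).factorial * realHurwitzZeta (p + 2) x := by
  rw [eqOn_polygamma_succ p hx, ← mul_assoc, ← mul_assoc, ← pow_add,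
    show p + 1 + 1 + p = 2 * (p + 1) by ring, pow_mul, neg_one_sq, one_pow, one_mul]

/-- Standard two-sided bounds for the polygamma function of order `m ≥ 1` at `x > 0`. -/
theorem stmt2 (m : ℕ) (hm : 1 ≤ m) (x : ℝ) (hx : 0 < x) :
    ((m - 1).factorial : ℝ) / x ^ m + (m.factorial : ℝ) / (2 * x ^ (m + 1)) ≤
        (-1 : ℝ) ^ (m + 1) * polygamma m x ∧
      (-1 : ℝ) ^ (m + 1) * polygamma m x ≤
        ((m - 1).factorial : ℝ) / x ^ m + (m.factorial : ℝ) / x ^ (m + 1) := by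
  obtain ⟨p, rfl⟩ : ∃ p, m = p + 1 := ⟨m - 1, by omega⟩
  rw [neg_one_pow_mul_polygamma_succ p hx, Nat.add_sub_cancel]
  have hfac : ((p + 1).factorial : ℝ) = (p + 1) * p.factorial := by
    push_cast [Nat.factorial_succ]; ring
  have hfac_nonneg : (0 : ℝ) ≤ (p + 1).factorial := by positivity
  constructor
  · refine le_of_eq_of_le ?_ <| mul_le_mul_of_nonneg_left
      (le_realHurwitzZeta_succ (p := p + 1) (by omega) hx) hfac_nonneg
    rw [hfac]
    push_cast
    field_simp
  · refine (mul_le_mul_of_nonneg_left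
      (realHurwitzZeta_succ_le (p := p + 1) (by omega) hx) hfac_nonneg).trans_eq ?_
    rw [hfac]
    push_cast
    field_simp
end

section
/- Let X_1, …, X_n be i.i.d. copies of X = Σ_l sqrt(λ_l) ξ_l e_l with E[ξ_l^4] ≤ M uniformly, and let Γ_n := (1/n) Σ_i X_i ⊗ X_i and Γ := E[X ⊗ X]. Then for all l, k, E[ ⟨(Γ_n − Γ) e_l, e_k⟩^2 ] ≤ (M/n) λ_l λ_k. -/
/-!
With `f x = ⟪x, e l⟫ * ⟪x, e k⟫`, the left side is the variance of the average of the i.i.d.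
variables `f (X i)`, hence `1/n` times the variance of one of them. That variance is at most
`E[f(X)²] = λ_l λ_k E[ξ_l² ξ_k²] ≤ λ_l λ_k (E[ξ_l⁴] + E[ξ_k⁴]) / 2 ≤ λ_l λ_k M`.
-/

open MeasureTheory ProbabilityTheory

section
variable {Ω : Type*} [MeasurableSpace Ω] {μ : Measure Ω}

lemma memLp_two_of_sq_le {Z g : Ω → ℝ} (hZ : AEStronglyMeasurable Z μ) (hg : Integrable g μ)
    (hle : ∀ᵐ ω ∂μ, Z ω ^ 2 ≤ g ω) : MemLp Z 2 μ :=
  (memLp_two_iff_integrable_sq hZ).mpr <| hg.mono' (hZ.pow 2) <| by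
    filter_upwards [hle] with ω h
    rwa [Real.norm_of_nonneg (sq_nonneg _)]

variable [IsProbabilityMeasure μ]

lemma variance_le_integral_of_sq_le {Z g : Ω → ℝ} (hZ : AEStronglyMeasurable Z μ)
    (hg : Integrable g μ) (hle : ∀ᵐ ω ∂μ, Z ω ^ 2 ≤ g ω) : Var[Z; μ] ≤ ∫ ω, g ω ∂μ :=
  (variance_le_expectation_sq hZ).trans <|
    integral_mono_of_nonneg (.of_forall fun ω => sq_nonneg (Z ω)) hg hle

lemma integral_sq_average_sub_le {ι : Type*} [Fintype ι] [Nonempty ι] {Y : ι → Ω → ℝ} {m v : ℝ}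
    (hY : ∀ i, MemLp (Y i) 2 μ) (hindep : Pairwise fun i j => Y i ⟂ᵢ[μ] Y j)
    (hmean : ∀ i, ∫ ω, Y i ω ∂μ = m) (hvar : ∀ i, Var[Y i; μ] ≤ v) :
    ∫ ω, (1 / (Fintype.card ι : ℝ) * ∑ i, Y i ω - m) ^ 2 ∂μ ≤ v / Fintype.card ι := by
  set c : ℝ := 1 / Fintype.card ι
  have hcard : (Fintype.card ι : ℝ) ≠ 0 := Nat.cast_ne_zero.mpr Fintype.card_ne_zero
  have hsum_mem : MemLp (∑ i, Y i) 2 μ := memLp_finsetSum' _ fun i _ => hY i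
  have hmean_avg : ∫ ω, c * ∑ i, Y i ω ∂μ = m := by
    rw [integral_const_mul, integral_finsetSum _ fun i _ => (hY i).integrable one_le_two]
    simp [c, hmean, hcard]
  calc ∫ ω, (c * ∑ i, Y i ω - m) ^ 2 ∂μ
      = Var[fun ω => c * (∑ i, Y i) ω; μ] := by
        rw [variance_eq_integral (hsum_mem.const_mul c).aestronglyMeasurable.aemeasurable]
        simp only [Finset.sum_apply, hmean_avg]
    _ = c ^ 2 * ∑ i, Var[Y i; μ] := by
        rw [variance_const_mul, IndepFun.variance_sum (fun i _ => hY i)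
          fun i _ j _ hij => hindep hij]
    _ ≤ c ^ 2 * (Fintype.card ι * v) := by
        gcongr
        simpa using Finset.sum_le_sum fun i (_ : i ∈ Finset.univ) => hvar i
    _ = v / Fintype.card ι := by simp only [c]; field_simp
end

lemma sq_sqrt_mul_mul_sqrt_mul_le {s t x y : ℝ} (hs : 0 ≤ s) (ht : 0 ≤ t) :
    (√s * x * (√t * y)) ^ 2 ≤ s * t * ((x ^ 4 + y ^ 4) / 2) := by
  have hxy : x ^ 2 * y ^ 2 ≤ (x ^ 4 + y ^ 4) / 2 := by nlinarith [sq_nonneg (x ^ 2 - y ^ 2)]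
  calc (√s * x * (√t * y)) ^ 2 = √s ^ 2 * √t ^ 2 * (x ^ 2 * y ^ 2) := by ring
    _ ≤ s * t * ((x ^ 4 + y ^ 4) / 2) := by
        rw [Real.sq_sqrt hs, Real.sq_sqrt ht]; gcongr

theorem stmt12_general {H : Type*} [NormedAddCommGroup H] [InnerProductSpace ℝ H]
    [MeasurableSpace H] [BorelSpace H]
    {Ω : Type*} [MeasureSpace Ω] [IsProbabilityMeasure (volume : Measure Ω)]
    (n : ℕ) [NeZero n] (X : Fin n → Ω → H)
    (hmeas : ∀ i, Measurable (X i))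
    (hindep : ProbabilityTheory.iIndepFun X volume)
    (hid : ∀ i, ProbabilityTheory.IdentDistrib (X i) (X ⟨0, Nat.pos_of_neZero n⟩) volume volume)
    (e : ℕ → H)
    (lam : ℕ → ℝ) (hpos : ∀ l, 0 < lam l)
    (ξ : ℕ → Fin n → Ω → ℝ)
    (hKL : ∀ l i, ∀ᵐ ω, (inner ℝ (X i ω) (e l) : ℝ) = Real.sqrt (lam l) * ξ l i ω)
    (M : ℝ)
    (hint4 : ∀ l i, Integrable (fun ω => (ξ l i ω) ^ 4))
    (hM : ∀ l i, ∫ ω, (ξ l i ω) ^ 4 ≤ M) :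
    ∀ l k, ∫ ω, ((1 / (n : ℝ)) * ∑ i, (inner ℝ (X i ω) (e l) : ℝ) * (inner ℝ (X i ω) (e k) : ℝ)
        - ∫ ω', (inner ℝ (X ⟨0, Nat.pos_of_neZero n⟩ ω') (e l) : ℝ) * (inner ℝ (X ⟨0, Nat.pos_of_neZero n⟩ ω') (e k) : ℝ)) ^ 2
      ≤ (M / (n : ℝ)) * (lam l * lam k) := by
  intro l k
  set f : H → ℝ := fun x => inner ℝ x (e l) * inner ℝ x (e k)
  have hf : Measurable f := by fun_prop
  set g : Fin n → Ω → ℝ := fun i ω => lam l * lam k * ((ξ l i ω ^ 4 + ξ k i ω ^ 4) / 2)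
  have hg : ∀ i, Integrable (g i) := fun i =>
    (((hint4 l i).add (hint4 k i)).div_const 2).const_mul _
  have hsq : ∀ i, ∀ᵐ ω, (f ∘ X i) ω ^ 2 ≤ g i ω := fun i => by
    filter_upwards [hKL l i, hKL k i] with ω hl hk
    simpa only [Function.comp_apply, f, hl, hk] using
      sq_sqrt_mul_mul_sqrt_mul_le (hpos l).le (hpos k).le
  have hfX : ∀ i, AEStronglyMeasurable (f ∘ X i) := fun i =>
    (hf.comp (hmeas i)).aestronglyMeasurable
  have hvar : ∀ i, Var[f ∘ X i; volume] ≤ M * (lam l * lam k) := fun i => by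
    refine (variance_le_integral_of_sq_le (hfX i) (hg i) (hsq i)).trans ?_
    rw [integral_const_mul, integral_div, integral_add (hint4 l i) (hint4 k i), mul_comm M]
    gcongr
    · exact (mul_pos (hpos l) (hpos k)).le
    · linarith [hM l i, hM k i]
  have hbound := integral_sq_average_sub_le (fun i => memLp_two_of_sq_le (hfX i) (hg i) (hsq i))
    (fun i j hij => (hindep.indepFun hij).comp hf hf) (fun i => ((hid i).comp hf).integral_eq) hvar
  simpa only [Fintype.card_fin, Function.comp_apply, f, div_mul_eq_mul_div] using hbound

/-- Moment bound for matrix elements of the empirical covariance operator: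
`E[⟨(Γ_n − Γ)e_l, e_k⟩²] ≤ (M/n) λ_l λ_k`. -/
theorem stmt12 {H : Type*} [NormedAddCommGroup H] [InnerProductSpace ℝ H]
    [MeasurableSpace H] [BorelSpace H]
    {Ω : Type*} [MeasureSpace Ω] [IsProbabilityMeasure (volume : Measure Ω)]
    (n : ℕ) [NeZero n] (X : Fin n → Ω → H)
    (hmeas : ∀ i, Measurable (X i))
    (hindep : ProbabilityTheory.iIndepFun X volume)
    (hid : ∀ i, ProbabilityTheory.IdentDistrib (X i) (X ⟨0, Nat.pos_of_neZero n⟩) volume volume)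
    (e : ℕ → H) (he : Orthonormal ℝ e)
    (lam : ℕ → ℝ) (hpos : ∀ l, 0 < lam l) (hsum : Summable lam)
    (ξ : ℕ → Fin n → Ω → ℝ)
    (hKL : ∀ l i, ∀ᵐ ω, (inner ℝ (X i ω) (e l) : ℝ) = Real.sqrt (lam l) * ξ l i ω)
    (hmean : ∀ l i, ∫ ω, ξ l i ω = 0)
    (hcov : ∀ l l' i, ∫ ω, ξ l i ω * ξ l' i ω = if l = l' then 1 else 0)
    (M : ℝ)
    (hint4 : ∀ l i, Integrable (fun ω => (ξ l i ω) ^ 4))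
    (hM : ∀ l i, ∫ ω, (ξ l i ω) ^ 4 ≤ M) :
    ∀ l k, ∫ ω, ((1 / (n : ℝ)) * ∑ i, (inner ℝ (X i ω) (e l) : ℝ) * (inner ℝ (X i ω) (e k) : ℝ)
        - ∫ ω', (inner ℝ (X ⟨0, Nat.pos_of_neZero n⟩ ω') (e l) : ℝ) * (inner ℝ (X ⟨0, Nat.pos_of_neZero n⟩ ω') (e k) : ℝ)) ^ 2
      ≤ (M / (n : ℝ)) * (lam l * lam k) :=
  stmt12_general n X hmeas hindep hid e lam hpos ξ hKL M hint4 hM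
end
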